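/- Every substitution instance of the axiom 4□ (□p → □□p) is valid on every bi-intuitionistic frame that is back–up confluent, and also on every bi-intuitionistic frame that is forth–down confluent. -/

import Mathlib

universe u

/-- Formulas of the intuitionistic modal language `L`, with a countably infinite
set of propositional variables indexed by `ℕ`. -/
inductive Fml : Type where
  | var : ℕ → Fml
  | bot : Fml
  | and : Fml → Fml → Fml
  | or : Fml → Fml → Fml
  | imp : Fml → Fml → Fml
  | dia : Fml → Fml
  | box : Fml → Fml
  deriving DecidableEq

/-- A birelational structure: a set of worlds, a set of fallible worlds, an
intuitionistic relation `le` (`≼`), a modal relation `sq` (`⊑`) and a valuation. -/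
structure KModel : Type (u + 1) where
  W : Type u
  fallible : Set W
  le : W → W → Prop
  sq : W → W → Prop
  val : ℕ → Set W

namespace KModel

/-- The satisfaction relation. -/
def Sat (M : KModel.{u}) : Fml → M.W → Prop
  | .var p, w => w ∈ M.val p
  | .bot, w => w ∈ M.fallible
  | .and φ ψ, w => Sat M φ w ∧ Sat M ψ w
  | .or φ ψ, w => Sat M φ w ∨ Sat M ψ w
  | .imp φ ψ, w => ∀ v, M.le w v → Sat M φ v → Sat M ψ v
  | .dia φ, w => ∀ u, M.le w u → ∃ v, M.sq u v ∧ Sat M φ v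
  | .box φ, w => ∀ u v, M.le w u → M.sq u v → Sat M φ v

/-- `M` is a bi-intuitionistic model: both relations are preorders, the set of
fallible worlds is closed under both relations, and the valuation is
`≼`-monotone and contains the fallible worlds. -/
def IsBiInt (M : KModel.{u}) : Prop :=
  (∀ w, M.le w w) ∧ (∀ u v w, M.le u v → M.le v w → M.le u w) ∧
  (∀ w, M.sq w w) ∧ (∀ u v w, M.sq u v → M.sq v w → M.sq u w) ∧
  (∀ w v, w ∈ M.fallible → M.le w v → v ∈ M.fallible) ∧
  (∀ w v, w ∈ M.fallible → M.sq w v → v ∈ M.fallible) ∧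
  (∀ p w v, w ∈ M.val p → M.le w v → v ∈ M.val p) ∧
  (∀ p w, w ∈ M.fallible → w ∈ M.val p)

/-- `⊑` is forth–up confluent for `≼`. -/
def ForthUp (M : KModel.{u}) : Prop :=
  ∀ w w' v, M.le w w' → M.sq w v → ∃ v', M.le v v' ∧ M.sq w' v'

/-- `⊑` is back–up confluent for `≼`. -/
def BackUp (M : KModel.{u}) : Prop :=
  ∀ w v v', M.sq w v → M.le v v' → ∃ w', M.le w w' ∧ M.sq w' v'

/-- `⊑` is forth–down confluent for `≼`. -/
def ForthDown (M : KModel.{u}) : Prop :=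
  ∀ w v v', M.le w v → M.sq v v' → ∃ w', M.sq w w' ∧ M.le w' v'

/-- `≼` is upward linear. -/
def UpLinear (M : KModel.{u}) : Prop :=
  ∀ w u v, M.le w u → M.le w v → M.le u v ∨ M.le v u

/-- There are no fallible worlds. -/
def Infallible (M : KModel.{u}) : Prop := M.fallible = ∅

/-- CS4 frames: back–up confluent bi-intuitionistic frames. -/
def IsCS4 (M : KModel.{u}) : Prop := M.IsBiInt ∧ M.BackUp

/-- IS4 frames: forth–up confluent infallible CS4 frames. -/
def IsIS4 (M : KModel.{u}) : Prop := M.IsCS4 ∧ M.ForthUp ∧ M.Infallible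

/-- GS4 frames: upward-linear IS4 frames. -/
def IsGS4 (M : KModel.{u}) : Prop := M.IsIS4 ∧ M.UpLinear

/-- GS4c frames: forth–down confluent GS4 frames. -/
def IsGS4c (M : KModel.{u}) : Prop := M.IsGS4 ∧ M.ForthDown

/-- S4I frames: forth–up and forth–down confluent infallible bi-intuitionistic frames. -/
def IsS4I (M : KModel.{u}) : Prop :=
  M.IsBiInt ∧ M.ForthUp ∧ M.ForthDown ∧ M.Infallible

end KModel

/-! Suppose `□φ` holds at `u` and `u ≼ a ⊑ b ≼ c ⊑ d`; we need `φ` at `d`. Back–up confluence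
rewrites `a ⊑ b ≼ c` as `a ≼ u' ⊑ c`, so `d` is reached from `u` by one `≼`-step followed by one
`⊑`-step. Forth–down confluence rewrites `b ≼ c ⊑ d` as `b ⊑ w' ≼ d`, so `φ` holds at `w'` and
persists along `≼` to `d`. -/

namespace KModel

variable {M : KModel.{u}}

theorem IsBiInt.sat_mono (hM : M.IsBiInt) (φ : Fml) {w v : M.W} (hwv : M.le w v) :
    M.Sat φ w → M.Sat φ v := by
  obtain ⟨-, hle_trans, -, -, hfallible_le, -, hval_le, -⟩ := hM
  induction φ generalizing w v with
  | var p => exact fun hw => hval_le p w v hw hwv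
  | bot => exact fun hw => hfallible_le w v hw hwv
  | and φ ψ ihφ ihψ => exact fun hw => ⟨ihφ hwv hw.1, ihψ hwv hw.2⟩
  | or φ ψ ihφ ihψ => exact Or.imp (ihφ hwv) (ihψ hwv)
  | imp φ ψ => exact fun hw x hvx => hw x (hle_trans w v x hwv hvx)
  | dia φ => exact fun hw x hvx => hw x (hle_trans w v x hwv hvx)
  | box φ => exact fun hw x y hvx hxy => hw x y (hle_trans w v x hwv hvx) hxy

theorem sat_imp_of_forall {φ ψ : Fml} (h : ∀ v, M.Sat φ v → M.Sat ψ v) (w : M.W) :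
    M.Sat (φ.imp ψ) w :=
  fun v _ => h v

theorem IsBiInt.sat_box_box_of_backUp (hM : M.IsBiInt) (hBU : M.BackUp) {φ : Fml} {w : M.W}
    (hw : M.Sat φ.box w) : M.Sat φ.box.box w := by
  obtain ⟨-, hle_trans, -, hsq_trans, -⟩ := hM
  intro a b hwa hab c d hbc hcd
  obtain ⟨w', haw', hw'c⟩ := hBU a b c hab hbc
  exact hw w' d (hle_trans w a w' hwa haw') (hsq_trans w' c d hw'c hcd)

theorem IsBiInt.sat_box_box_of_forthDown (hM : M.IsBiInt) (hFD : M.ForthDown) {φ : Fml}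
    {w : M.W} (hw : M.Sat φ.box w) : M.Sat φ.box.box w := by
  have hsq_trans := hM.2.2.2.1
  intro a b hwa hab c d hbc hcd
  obtain ⟨w', hbw', hw'd⟩ := hFD b c d hbc hcd
  exact hM.sat_mono φ hw'd (hw a w' hwa (hsq_trans a b w' hab hbw'))

end KModel

/-- **Validity of 4□.** Every substitution instance `□φ → □□φ` of the axiom
`□p → □□p` is valid on every bi-intuitionistic frame that is back–up confluent,
and also on every bi-intuitionistic frame that is forth–down confluent. -/
theorem fourBox_valid (M : KModel.{u}) (hM : M.IsBiInt) (φ : Fml) :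
    (M.BackUp → ∀ w : M.W, w ∉ M.fallible →
      M.Sat (((φ.box).imp ((φ.box).box))) w) ∧
    (M.ForthDown → ∀ w : M.W, w ∉ M.fallible →
      M.Sat (((φ.box).imp ((φ.box).box))) w) :=
  ⟨fun hBU w _ => KModel.sat_imp_of_forall (fun _ => hM.sat_box_box_of_backUp hBU) w,
    fun hFD w _ => KModel.sat_imp_of_forall (fun _ => hM.sat_box_box_of_forthDown hFD) w⟩
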